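/- arXiv:2202.05238 — 3 statements merged into one kernel-verified Lean document; each statement's English description precedes it below -/
import Mathlib

section
/- For every n ≥ 1, the number S(n) of distinct score sequences of n-vertex tournaments satisfies S(n) = ∑_{E=⌈(n-1)/2⌉}^{n-1} F_n[C(n,2), E]. (Bent's theorem.) -/
/-- A tournament on `n` vertices: for each pair of distinct vertices exactly one
of the two possible directed edges is present.  `dom v w` means `v` dominates `w`. -/
structure Tournament (n : ℕ) where
  dom : Fin n → Fin n → Bool
  irrefl : ∀ v, dom v v = false
  asymm : ∀ v w : Fin n, v ≠ w → dom v w = !(dom w v)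

/-- The score of a vertex: the number of vertices it dominates. -/
def Tournament.score {n : ℕ} (T : Tournament n) (v : Fin n) : ℕ :=
  (Finset.univ.filter (fun w => T.dom v w = true)).card

/-- The score sequence of a tournament: its multiset of scores, sorted nondecreasingly. -/
def Tournament.scoreList {n : ℕ} (T : Tournament n) : List ℕ :=
  Multiset.sort (Multiset.map T.score Finset.univ.val) (· ≤ ·)

/-- `F n T E` is the number of nondecreasing sequences `(s_1 ≤ ⋯ ≤ s_n)` of nonnegative
integers with `∑_{i=1}^r s_i ≥ C(r,2)` for all `1 ≤ r < n`, total sum `T`, and last term `E`. -/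
noncomputable def F (n T E : ℕ) : ℕ :=
  {l : List ℕ | l.length = n ∧ l.Pairwise (· ≤ ·) ∧
    (∀ r, 1 ≤ r → r < n → r.choose 2 ≤ (l.take r).sum) ∧
    l.sum = T ∧ l.getLast? = some E}.ncard

/-- `S n` is the number of distinct score sequences of `n`-vertex tournaments. -/
noncomputable def S (n : ℕ) : ℕ :=
  {l : List ℕ | ∃ T : Tournament n, T.scoreList = l}.ncard

/-!
By Landau's theorem, a nondecreasing sequence of `n` naturals is a score sequence iff each
prefix of length `r` sums to at least `C(r,2)` and the total is `C(n,2)`.  Necessity holds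
because any `r` players play `C(r,2)` games among themselves; sufficiency follows from Hall's
theorem, matching every game to a unit of score of one of its two players.  Score sequences
are then grouped by their last, largest, entry `E`: it is a score, so `E ≤ n - 1`, and it is at
least the average score `(n - 1) / 2`.
-/

open Finset

theorem Multiset.exists_finset_of_le_map {α β : Type*} {f : α → β} {s : Finset α}
    {m : Multiset β} (h : m ≤ s.val.map f) : ∃ A ⊆ s, m = A.val.map f := by
  rcases s with ⟨⟨l₂⟩, hnd⟩
  rcases m with ⟨l₁⟩
  obtain ⟨l, hperm, hsub⟩ := Multiset.coe_le.1 h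
  obtain ⟨l', hl', rfl⟩ := List.sublist_map_iff.1 hsub
  exact ⟨⟨l', hl'.nodup hnd⟩, fun x hx => hl'.subset hx, Multiset.coe_eq_coe.2 hperm.symm⟩

theorem Monotone.sum_val_lt_card_le_sum {M : Type*} [AddCommMonoid M] [PartialOrder M]
    [IsOrderedAddMonoid M] {m : ℕ} {s : Fin m → M} (hs : Monotone s) (A : Finset (Fin m)) :
    ∑ j with j.val < #A, s j ≤ ∑ j ∈ A, s j := by
  induction A using Finset.induction_on_max with
  | empty => simp
  | insert a B hlt ih =>
    have hB : #B ≤ a := by simpa using card_le_card fun x hx => mem_Iio.2 (hlt x hx)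
    have hsplit : univ.filter (fun j : Fin m => j.val < #B + 1) =
        insert ⟨#B, hB.trans_lt a.2⟩ (univ.filter fun j : Fin m => j.val < #B) := by
      ext j
      simp only [Order.lt_add_one_iff, mem_filter, mem_univ, true_and, mem_insert, Fin.ext_iff]
      omega
    have ha : a ∉ B := fun h => lt_irrefl a (hlt a h)
    rw [card_insert_of_notMem ha, sum_insert ha, hsplit, sum_insert (by simp)]
    exact add_le_add (hs hB) ih

def landauSeqs (n : ℕ) : Set (List ℕ) :=
  {l | l.length = n ∧ l.Pairwise (· ≤ ·) ∧
    (∀ r, 1 ≤ r → r < n → r.choose 2 ≤ (l.take r).sum) ∧ l.sum = n.choose 2}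

theorem choose_two_le_sum_take_of_mem_landauSeqs {n : ℕ} {l : List ℕ} (hl : l ∈ landauSeqs n)
    {r : ℕ} (hr : r ≤ n) : r.choose 2 ≤ (l.take r).sum := by
  obtain ⟨hlen, -, hpre, hsum⟩ := hl
  rcases Nat.eq_zero_or_pos r with rfl | hr0
  · simp
  rcases hr.lt_or_eq with hrn | rfl
  · exact hpre r hr0 hrn
  · rw [List.take_of_length_le hlen.le, hsum]

namespace Tournament

variable {n : ℕ}

instance : Finite (Tournament n) :=
  Finite.of_injective dom fun T T' h => by cases T; cases T'; congr

lemma ne_of_dom (T : Tournament n) {v w : Fin n} (h : T.dom v w = true) : v ≠ w := by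
  rintro rfl
  simp [T.irrefl] at h

lemma not_dom_of_dom (T : Tournament n) {v w : Fin n} (h : T.dom v w = true) :
    T.dom w v = false := by
  simpa [h] using T.asymm v w (T.ne_of_dom h)

/-- Every pair of vertices of `A` is counted once, at its winner. -/
theorem sum_card_filter_dom (T : Tournament n) (A : Finset (Fin n)) :
    ∑ v ∈ A, #{w ∈ A | T.dom v w} = (#A).choose 2 := by
  rw [← card_sigma, ← card_powersetCard]
  apply card_nbij (fun p => {p.1, p.2})
  · rintro ⟨v, w⟩ h
    simp only [coe_sigma, Set.mem_sigma_iff, mem_coe, mem_filter] at h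
    simp [mem_powersetCard, insert_subset_iff, h.1, h.2.1, card_pair (T.ne_of_dom h.2.2)]
  · rintro ⟨v, w⟩ h ⟨v', w'⟩ h' heq
    simp only [coe_sigma, Set.mem_sigma_iff, mem_coe, mem_filter] at h h'
    rw [← coe_inj, coe_pair, coe_pair, Set.pair_eq_pair_iff] at heq
    rcases heq with ⟨rfl, rfl⟩ | ⟨rfl, rfl⟩
    · rfl
    · simp [T.not_dom_of_dom h.2.2] at h'
  · intro e he
    obtain ⟨heA, he2⟩ := mem_powersetCard.1 he
    obtain ⟨x, y, hxy, rfl⟩ := card_eq_two.1 he2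
    have hx : x ∈ A := heA (mem_insert_self x {y})
    have hy : y ∈ A := heA (mem_insert_of_mem (mem_singleton_self y))
    cases hd : T.dom x y
    · refine ⟨⟨y, x⟩, ?_, pair_comm y x⟩
      have := T.asymm x y hxy
      simp_all
    · exact ⟨⟨x, y⟩, by simp_all, rfl⟩

theorem choose_two_card_le_sum_score (T : Tournament n) (A : Finset (Fin n)) :
    (#A).choose 2 ≤ ∑ v ∈ A, T.score v := by
  rw [← T.sum_card_filter_dom A]
  exact sum_le_sum fun v _ => card_le_card (filter_subset_filter _ (subset_univ A))

theorem sum_score (T : Tournament n) : ∑ v, T.score v = n.choose 2 := by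
  simpa [score] using T.sum_card_filter_dom univ

theorem score_le (T : Tournament n) (v : Fin n) : T.score v ≤ n - 1 := by
  have : univ.filter (fun w => T.dom v w) ⊆ univ.erase v := fun w hw =>
    mem_erase.2 ⟨(T.ne_of_dom (mem_filter.1 hw).2).symm, mem_univ w⟩
  simpa [score] using card_le_card this

section ofWinner

variable (win : {e : Finset (Fin n) // #e = 2} → Fin n) (hwin : ∀ e, win e ∈ e.1)

def ofWinner : Tournament n where
  dom v w := if h : v = w then false else win ⟨{v, w}, card_pair h⟩ = v
  irrefl v := dif_pos rfl
  asymm v w h := by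
    have hvw := hwin ⟨{v, w}, card_pair h⟩
    have hswap : (⟨{w, v}, card_pair (Ne.symm h)⟩ : {e : Finset (Fin n) // #e = 2}) =
        ⟨{v, w}, card_pair h⟩ := Subtype.ext (pair_comm w v)
    simp only [dif_neg h, dif_neg (Ne.symm h), hswap]
    simp only [mem_insert, mem_singleton] at hvw
    rcases hvw with hv | hw <;> simp [*, Ne.symm h]

theorem dom_ofWinner_iff {v w : Fin n} (h : v ≠ w) :
    (ofWinner win hwin).dom v w = true ↔ win ⟨{v, w}, card_pair h⟩ = v := by
  simp [ofWinner, h]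

theorem score_ofWinner (v : Fin n) : (ofWinner win hwin).score v = #{e | win e = v} := by
  have hne : ∀ {w}, w ∈ univ.filter (fun w => (ofWinner win hwin).dom v w) → v ≠ w :=
    fun hw => (ofWinner win hwin).ne_of_dom (mem_filter.1 hw).2
  refine card_bij (fun w hw => ⟨{v, w}, card_pair (hne hw)⟩) ?_ ?_ ?_
  · intro w hw
    simpa using (dom_ofWinner_iff win hwin (hne hw)).1 (mem_filter.1 hw).2
  · intro w hw w' hw' h
    have := congrArg (fun e : {e : Finset (Fin n) // #e = 2} => e.1) h
    simp only at this
    rw [← coe_inj, coe_pair, coe_pair, Set.pair_eq_pair_iff] at this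
    rcases this with ⟨-, rfl⟩ | ⟨rfl, rfl⟩ <;> rfl
  · rintro ⟨e, he⟩ hwe
    obtain ⟨x, y, hxy, rfl⟩ := card_eq_two.1 he
    have hmem := hwin ⟨{x, y}, he⟩
    rw [(mem_filter.1 hwe).2] at hmem
    simp only [mem_insert, mem_singleton] at hmem
    rcases hmem with rfl | rfl
    · refine ⟨y, ?_, rfl⟩
      simpa [dom_ofWinner_iff win hwin hxy] using (mem_filter.1 hwe).2
    · refine ⟨x, ?_, Subtype.ext (pair_comm _ _)⟩
      rw [mem_filter, dom_ofWinner_iff win hwin (Ne.symm hxy)]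
      refine ⟨mem_univ x, ?_⟩
      convert (mem_filter.1 hwe).2 using 3
      exact pair_comm _ _

end ofWinner

/-- **Landau's theorem.** By Hall's theorem every game can be matched injectively to one of
the slots `⟨v, k⟩`, `k < s v`, of one of its players `v`, who is then declared its winner. -/
theorem exists_score_eq {s : Fin n → ℕ}
    (hs : ∀ A : Finset (Fin n), (#A).choose 2 ≤ ∑ v ∈ A, s v)
    (hsum : ∑ v, s v = n.choose 2) : ∃ T : Tournament n, T.score = s := by
  let slots : {e : Finset (Fin n) // #e = 2} → Finset (Σ _ : Fin n, ℕ) :=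
    fun e => e.1.sigma fun v => range (s v)
  have hall : ∀ G : Finset {e : Finset (Fin n) // #e = 2}, #G ≤ #(G.biUnion slots) := by
    intro G
    set V := G.biUnion Subtype.val
    have hslots : G.biUnion slots = V.sigma fun v => range (s v) := by
      ext ⟨v, k⟩
      simp only [slots, V, mem_biUnion, mem_sigma]
      tauto
    calc #G ≤ #(V.powersetCard 2) :=
          card_le_card_of_injOn Subtype.val
            (fun e he => mem_powersetCard.2 ⟨subset_biUnion_of_mem _ he, e.2⟩)
            Subtype.val_injective.injOn
      _ = (#V).choose 2 := card_powersetCard 2 V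
      _ ≤ ∑ v ∈ V, s v := hs V
      _ = #(G.biUnion slots) := by simp [hslots, card_sigma]
  obtain ⟨f, hf_inj, hf_mem⟩ := (all_card_le_biUnion_card_iff_exists_injective slots).1 hall
  have hf_slot : ∀ e, (f e).1 ∈ e.1 ∧ (f e).2 < s (f e).1 := fun e => by
    simpa [slots] using hf_mem e
  let T := ofWinner (fun e => (f e).1) fun e => (hf_slot e).1
  have hle : ∀ v, T.score v ≤ s v := by
    intro v
    rw [score_ofWinner]
    calc #{e | (f e).1 = v} ≤ #(range (s v)) := by
          refine card_le_card_of_injOn (fun e => (f e).2) (fun e he => ?_)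
            (fun e he e' he' h => ?_)
          · simpa [← (mem_filter.1 he).2] using (hf_slot e).2
          · exact hf_inj (Sigma.ext ((mem_filter.1 he).2.trans (mem_filter.1 he').2.symm)
              (heq_of_eq h))
      _ = s v := card_range _
  refine ⟨T, funext fun v => ?_⟩
  exact (sum_eq_sum_iff_of_le fun v _ => hle v).1 (T.sum_score.trans hsum.symm) v (mem_univ v)

theorem coe_scoreList (T : Tournament n) :
    (T.scoreList : Multiset ℕ) = univ.val.map T.score :=
  Multiset.sort_eq _ _

theorem length_scoreList (T : Tournament n) : T.scoreList.length = n := by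
  rw [scoreList, Multiset.length_sort, Multiset.card_map, card_val, card_univ, Fintype.card_fin]

theorem sum_scoreList (T : Tournament n) : T.scoreList.sum = n.choose 2 := by
  rw [← Multiset.sum_coe, coe_scoreList, ← T.sum_score]
  rfl

theorem choose_two_le_sum_take_scoreList (T : Tournament n) {r : ℕ} (hr : r ≤ n) :
    r.choose 2 ≤ (T.scoreList.take r).sum := by
  have hle : ((T.scoreList.take r : List ℕ) : Multiset ℕ) ≤ univ.val.map T.score :=
    T.coe_scoreList ▸ Multiset.coe_le.2 (List.take_sublist r _).subperm
  obtain ⟨A, -, hA⟩ := Multiset.exists_finset_of_le_map hle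
  have hcard : #A = r := by
    have := congrArg Multiset.card hA
    simp only [Multiset.coe_card, List.length_take, length_scoreList, Multiset.card_map,
      card_val] at this
    omega
  rw [← Multiset.sum_coe, hA, ← hcard]
  exact T.choose_two_card_le_sum_score A

theorem scoreList_mem_landauSeqs (T : Tournament n) : T.scoreList ∈ landauSeqs n :=
  ⟨T.length_scoreList, Multiset.pairwise_sort _ _,
    fun _ _ hr => T.choose_two_le_sum_take_scoreList hr.le, T.sum_scoreList⟩

theorem exists_scoreList_eq {l : List ℕ} (hl : l ∈ landauSeqs n) :
    ∃ T : Tournament n, T.scoreList = l := by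
  obtain ⟨rfl, hsort, -, hsum⟩ := id hl
  let s : Fin l.length → ℕ := fun i => l[i]
  have hofFn : List.ofFn s = l := List.ofFn_getElem
  have hmono : Monotone s := fun i j hij =>
    hij.eq_or_lt.elim (fun h => h ▸ le_rfl)
      fun h => List.pairwise_iff_getElem.1 hsort i j i.2 j.2 h
  have hland : ∀ A : Finset (Fin l.length), (#A).choose 2 ≤ ∑ v ∈ A, s v := by
    intro A
    calc (#A).choose 2 ≤ (l.take #A).sum :=
          choose_two_le_sum_take_of_mem_landauSeqs hl (by simpa using card_le_univ A)
      _ = ∑ j with j.val < #A, s j := by rw [← List.sum_take_ofFn, hofFn]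
      _ ≤ ∑ v ∈ A, s v := hmono.sum_val_lt_card_le_sum A
  obtain ⟨T, hT⟩ := exists_score_eq hland (by rw [← List.sum_ofFn, hofFn, hsum])
  refine ⟨T, ?_⟩
  rw [scoreList, hT, Fin.univ_val_map, hofFn, Multiset.coe_sort, List.mergeSort_eq_self _ hsort]

theorem range_scoreList : Set.range (scoreList (n := n)) = landauSeqs n :=
  Set.ext fun _ => ⟨fun ⟨T, hT⟩ => hT ▸ T.scoreList_mem_landauSeqs, exists_scoreList_eq⟩

end Tournament

theorem exists_getLast?_eq_of_mem_landauSeqs {n : ℕ} (hn : 1 ≤ n) {l : List ℕ}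
    (hl : l ∈ landauSeqs n) : ∃ E ∈ Icc (n / 2) (n - 1), l.getLast? = some E := by
  obtain ⟨T, rfl⟩ := Tournament.exists_scoreList_eq hl
  have hne : T.scoreList ≠ [] :=
    List.ne_nil_of_length_pos (by rw [T.length_scoreList]; exact hn)
  refine ⟨_, mem_Icc.2 ⟨?_, ?_⟩, List.getLast?_eq_some_getLast hne⟩
  · have hsum := List.sum_le_card_nsmul T.scoreList (T.scoreList.getLast hne)
      fun x hx => hl.2.1.rel_getLast hx
    rw [T.sum_scoreList, T.length_scoreList, smul_eq_mul] at hsum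
    have htwo : 2 * n.choose 2 = n * (n - 1) := by
      rw [Nat.choose_two_right, Nat.mul_div_cancel' (Nat.even_mul_pred_self n).two_dvd]
    have : n - 1 ≤ 2 * T.scoreList.getLast hne :=
      Nat.le_of_mul_le_mul_left (by linarith) hn
    omega
  · have hmem : T.scoreList.getLast hne ∈ univ.val.map T.score := by
      rw [← T.coe_scoreList]
      exact Multiset.mem_coe.2 (List.getLast_mem hne)
    obtain ⟨v, -, hv⟩ := Multiset.mem_map.1 hmem
    exact hv ▸ T.score_le v

theorem ncard_landauSeqs_eq_sum {n : ℕ} (hn : 1 ≤ n) :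
    (landauSeqs n).ncard =
      ∑ E ∈ Icc (n / 2) (n - 1), (landauSeqs n ∩ {l | l.getLast? = some E}).ncard := by
  have hunion : landauSeqs n = ⋃ E ∈ (Icc (n / 2) (n - 1) : Set ℕ),
      landauSeqs n ∩ {l | l.getLast? = some E} := by
    ext l
    simp only [Set.mem_iUnion, Set.mem_inter_iff, mem_coe, exists_prop]
    refine ⟨fun hl => ?_, fun ⟨_, _, hl, _⟩ => hl⟩
    obtain ⟨E, hE, hlast⟩ := exists_getLast?_eq_of_mem_landauSeqs hn hl
    exact ⟨E, hE, hl, hlast⟩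
  have hfin : (landauSeqs n).Finite := Tournament.range_scoreList ▸ Set.finite_range _
  rw [← finsum_mem_coe_finset, ← Set.Finite.ncard_biUnion (finite_toSet _)
    (fun _ _ => hfin.subset Set.inter_subset_left), ← hunion]
  exact fun E _ E' _ hEE' => Set.disjoint_left.2 fun l h h' =>
    hEE' (Option.some_injective _ (h.2.symm.trans h'.2))

theorem F_choose_two_eq_ncard (n E : ℕ) :
    F n (n.choose 2) E = (landauSeqs n ∩ {l | l.getLast? = some E}).ncard := by
  simp only [F, landauSeqs, Set.inter_def, Set.mem_ofPred_eq, and_assoc]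

/-- **Bent's theorem.** `S(n) = ∑_{E=⌈(n-1)/2⌉}^{n-1} F_n[C(n,2), E]` for `n ≥ 1`. -/
theorem bent_count (n : ℕ) (hn : 1 ≤ n) :
    S n = ∑ E ∈ Finset.Icc ((n - 1 + 1) / 2) (n - 1), F n (n.choose 2) E := by
  rw [Nat.sub_add_cancel hn]
  calc S n = (landauSeqs n).ncard := congrArg Set.ncard Tournament.range_scoreList
    _ = _ := ncard_landauSeqs_eq_sum hn
    _ = _ := sum_congr rfl fun E _ => (F_choose_two_eq_ncard n E).symm
end

section
/- For every m ≥ 1, the number SSCS(2m+1) of distinct score sequences of length 2m+1 that are both strong and self-complementary satisfies SSCS(2m+1) = ∑_{T=C(m,2)+1}^{m^2} ∑_{E=⌈T/m⌉}^{m} G_m[T, E]. -/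
/-!
Self-complementarity pairs `s_i` with `s_{2m+2-i} = 2m - s_i`, so the total `C(2m+1, 2)` forces
the middle term to be `m`, and a strong self-complementary sequence of length `2m+1` is determined
by its first half `t`. It is nondecreasing iff `t` is and `t_m ≤ m`; its strong conditions at
`r ≤ m` are those of `t` together with `C(m, 2) < ∑ t`, and at `r = m + 1 + j` they reduce, via
`C(m+1+j, 2) = C(m-j, 2) + m(2j+1)`, to the condition of `t` at `m - j`. Sorting the admissible
halves by their sum `T` and last term `E` gives the counts `G_m[T, E]`, and
`C(m, 2) < T ≤ mE ≤ m²` gives the range of summation.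
-/

/-- A score sequence of length `n`: nondecreasing, partial sums `≥ C(r,2)` for `1 ≤ r < n`,
and total sum `C(n,2)`. -/
def IsScoreSeq (l : List ℕ) : Prop :=
  l.Pairwise (· ≤ ·) ∧
  (∀ r, 1 ≤ r → r < l.length → r.choose 2 ≤ (l.take r).sum) ∧
  l.sum = l.length.choose 2

/-- A sequence of length `n` is self-complementary if `s_{n+1-i} = n-1-s_i`
for all `1 ≤ i ≤ ⌊n/2⌋` (here `l.getD (i-1) 0` is the `i`-th term `s_i`). -/
def IsSelfCompl (l : List ℕ) : Prop :=
  ∀ i, 1 ≤ i → i ≤ l.length / 2 →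
    ((l.getD (l.length - i) 0 : ℤ)) = (l.length : ℤ) - 1 - (l.getD (i - 1) 0 : ℤ)

/-- A strong score sequence of length `n`: nondecreasing, partial sums `> C(r,2)` for
`1 ≤ r < n`, and total sum `C(n,2)`. -/
def IsStrongScoreSeq (l : List ℕ) : Prop :=
  l.Pairwise (· ≤ ·) ∧
  (∀ r, 1 ≤ r → r < l.length → r.choose 2 < (l.take r).sum) ∧
  l.sum = l.length.choose 2

/-- `G n T E` is the number of nondecreasing sequences `(s_1 ≤ ⋯ ≤ s_n)` of nonnegative
integers with `∑_{i=1}^r s_i > C(r,2)` for all `1 ≤ r < n`, total sum `T`, and last term `E`. -/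
noncomputable def G (n T E : ℕ) : ℕ :=
  {l : List ℕ | l.length = n ∧ l.Pairwise (· ≤ ·) ∧
    (∀ r, 1 ≤ r → r < n → r.choose 2 < (l.take r).sum) ∧
    l.sum = T ∧ l.getLast? = some E}.ncard

/-- `SSCS n` is the number of distinct score sequences of length `n` that are both strong
and self-complementary. -/
noncomputable def SSCS (n : ℕ) : ℕ :=
  {l : List ℕ | l.length = n ∧ IsStrongScoreSeq l ∧ IsSelfCompl l}.ncard

theorem Nat.choose_two_add (a b : ℕ) : (a + b).choose 2 = a.choose 2 + b.choose 2 + a * b := by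
  rw [Nat.add_choose_eq]
  simp [Finset.Nat.antidiagonal_succ]
  ring

theorem Nat.choose_two_two_mul_add_one (j : ℕ) : (2 * j + 1).choose 2 = j * (2 * j + 1) := by
  rw [Nat.choose_two_right, Nat.add_sub_cancel, show (2 * j + 1) * (2 * j) = j * (2 * j + 1) * 2 by
    ring, Nat.mul_div_cancel _ two_pos]

theorem List.sum_map_tsub_add_sum {l : List ℕ} {k : ℕ} (h : ∀ x ∈ l, x ≤ k) :
    (l.map (k - ·)).sum + l.sum = l.length * k := by
  induction l with
  | nil => simp
  | cons a l ih =>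
    simp only [List.forall_mem_cons] at h
    simp only [List.map_cons, List.sum_cons, List.length_cons, add_mul, one_mul]
    have := ih h.2
    omega

theorem List.finite_setOf_length_eq_forall_le (n k : ℕ) :
    {l : List ℕ | l.length = n ∧ ∀ x ∈ l, x ≤ k}.Finite := by
  refine ((List.finite_length_eq (Fin (k + 1)) n).image (List.map Fin.val)).subset ?_
  rintro l ⟨hlen, hle⟩
  refine ⟨l.map (Fin.ofNat (k + 1)), by simpa using hlen, ?_⟩
  rw [List.map_map]
  refine (List.map_congr_left fun x hx => ?_).trans (List.map_id l)
  simpa using Nat.mod_eq_of_lt (Nat.lt_succ_of_le (hle x hx))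

theorem isSelfCompl_iff {l : List ℕ} :
    IsSelfCompl l ↔ ∀ i < l.length / 2, l.getD i 0 + l.reverse.getD i 0 = l.length - 1 := by
  refine ⟨fun h i hi => ?_, fun h i hi₁ hi₂ => ?_⟩
  · have := h (i + 1) (by omega) (by omega)
    rw [List.getD_reverse _ (by omega), show l.length - 1 - i = l.length - (i + 1) by omega]
    simp only [add_tsub_cancel_right] at this
    omega
  · have := h (i - 1) (by omega)
    rw [List.getD_reverse _ (by omega), show l.length - 1 - (i - 1) = l.length - i by omega] at this
    omega

def halfSeqs (m : ℕ) : Set (List ℕ) :=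
  {t | t.length = m ∧ t.Pairwise (· ≤ ·) ∧
    (∀ r, 1 ≤ r → r ≤ m → r.choose 2 < (t.take r).sum) ∧ ∀ x ∈ t, x ≤ m}

def mirrorExtend (m : ℕ) (t : List ℕ) : List ℕ :=
  t ++ m :: t.reverse.map (2 * m - ·)

section mirrorExtend

variable {m : ℕ} {t : List ℕ}

theorem length_mirrorExtend (ht : t.length = m) : (mirrorExtend m t).length = 2 * m + 1 := by
  simp [mirrorExtend, ht]
  omega

theorem take_mirrorExtend_of_le {r : ℕ} (ht : t.length = m) (hr : r ≤ m) :
    (mirrorExtend m t).take r = t.take r :=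
  List.take_append_of_le_length (ht ▸ hr)

theorem take_mirrorExtend (ht : t.length = m) : (mirrorExtend m t).take m = t := by
  rw [take_mirrorExtend_of_le ht le_rfl, ← ht, List.take_length]

theorem reverse_mirrorExtend :
    (mirrorExtend m t).reverse = t.map (2 * m - ·) ++ m :: t.reverse := by
  simp [mirrorExtend, List.map_reverse]

theorem sum_take_mirrorExtend {j : ℕ} (ht : t.length = m) (hle : ∀ x ∈ t, x ≤ 2 * m)
    (hj : j ≤ m) :
    ((mirrorExtend m t).take (m + 1 + j)).sum = (t.take (m - j)).sum + m + 2 * m * j := by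
  have htake : (mirrorExtend m t).take (m + 1 + j) =
      t ++ m :: (t.drop (m - j)).reverse.map (2 * m - ·) := by
    rw [mirrorExtend, List.take_append, List.take_of_length_le (by omega),
      show m + 1 + j - t.length = j + 1 by omega, List.take_succ_cons, ← List.map_take,
      List.take_reverse, ht]
  have hcompl := List.sum_map_tsub_add_sum (l := (t.drop (m - j)).reverse)
    fun x hx => hle x (List.mem_of_mem_drop (List.mem_reverse.mp hx))
  have hsplit := List.sum_take_add_sum_drop t (m - j)
  simp only [List.length_reverse, List.length_drop, List.sum_reverse, ht] at hcompl
  rw [show m - (m - j) = j by omega] at hcompl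
  rw [htake, List.sum_append, List.sum_cons]
  nlinarith

theorem pairwise_mirrorExtend_iff :
    (mirrorExtend m t).Pairwise (· ≤ ·) ↔ t.Pairwise (· ≤ ·) ∧ ∀ x ∈ t, x ≤ m := by
  simp only [mirrorExtend, List.pairwise_append, List.pairwise_cons, List.mem_cons,
    List.mem_map, List.mem_reverse, List.pairwise_map, List.pairwise_reverse]
  constructor
  · rintro ⟨hsort, -, hle⟩
    exact ⟨hsort, fun x hx => hle x hx m (Or.inl rfl)⟩
  · rintro ⟨hsort, hle⟩
    refine ⟨hsort, ⟨?_, hsort.imp fun h => Nat.sub_le_sub_left h _⟩, ?_⟩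
    · rintro _ ⟨y, hy, rfl⟩
      have := hle y hy
      omega
    · rintro x hx _ (rfl | ⟨y, hy, rfl⟩)
      · exact hle x hx
      · have := hle x hx
        have := hle y hy
        omega

theorem sum_mirrorExtend (ht : t.length = m) (hle : ∀ x ∈ t, x ≤ 2 * m) :
    (mirrorExtend m t).sum = (2 * m + 1).choose 2 := by
  have h := sum_take_mirrorExtend ht hle le_rfl
  rw [show m + 1 + m = 2 * m + 1 by ring, ← length_mirrorExtend ht, List.take_length,
    Nat.sub_self, List.take_zero, List.sum_nil] at h
  rw [h, Nat.choose_two_two_mul_add_one]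
  ring

theorem choose_two_lt_sum_take_mirrorExtend (ht : t ∈ halfSeqs m) {j : ℕ} (hj : j < m) :
    (m + 1 + j).choose 2 < ((mirrorExtend m t).take (m + 1 + j)).sum := by
  obtain ⟨hl, -, hstrong, hle⟩ := ht
  obtain ⟨a, rfl⟩ : ∃ a, m = a + j := ⟨m - j, by omega⟩
  have hchoose : (a + j + 1 + j).choose 2 = a.choose 2 + (a + j) * (2 * j + 1) := by
    rw [show a + j + 1 + j = a + (2 * j + 1) by ring, Nat.choose_two_add,
      Nat.choose_two_two_mul_add_one]
    ring
  rw [sum_take_mirrorExtend hl (fun x hx => (hle x hx).trans (by omega)) (by omega), hchoose,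
    Nat.add_sub_cancel]
  have := hstrong a (by omega) (by omega)
  nlinarith

theorem isStrongScoreSeq_mirrorExtend_iff (ht : t.length = m) :
    IsStrongScoreSeq (mirrorExtend m t) ↔ t ∈ halfSeqs m := by
  have hsum_take : ∀ r ≤ m, ((mirrorExtend m t).take r).sum = (t.take r).sum := fun r hr => by
    rw [take_mirrorExtend_of_le ht hr]
  rw [IsStrongScoreSeq, pairwise_mirrorExtend_iff, length_mirrorExtend ht]
  constructor
  · rintro ⟨⟨hsort, hle⟩, hstrong, -⟩
    exact ⟨ht, hsort, fun r hr₁ hr₂ => hsum_take r hr₂ ▸ hstrong r hr₁ (by omega), hle⟩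
  · intro hhalf
    have ⟨_, hsort, hstrong, hle⟩ := hhalf
    refine ⟨⟨hsort, hle⟩, fun r hr₁ hr₂ => ?_,
      sum_mirrorExtend ht fun x hx => (hle x hx).trans (by omega)⟩
    rcases le_or_gt r m with hr | hr
    · exact hsum_take r hr ▸ hstrong r hr₁ hr
    · obtain ⟨j, rfl⟩ : ∃ j, r = m + 1 + j := ⟨r - (m + 1), by omega⟩
      exact choose_two_lt_sum_take_mirrorExtend hhalf (by omega)

theorem isSelfCompl_mirrorExtend (ht : t.length = m) (hle : ∀ x ∈ t, x ≤ 2 * m) :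
    IsSelfCompl (mirrorExtend m t) := by
  rw [isSelfCompl_iff, reverse_mirrorExtend, length_mirrorExtend ht]
  intro i hi
  have hi : i < t.length := by omega
  rw [mirrorExtend, List.getD_append _ _ _ _ hi, List.getD_append _ _ _ _ (by simpa using hi),
    List.getD_eq_getElem _ _ hi, List.getD_eq_getElem _ _ (by simpa using hi),
    List.getElem_map]
  have := hle _ (List.getElem_mem hi)
  omega

end mirrorExtend

theorem IsSelfCompl.eq_mirrorExtend_take {l : List ℕ} {m : ℕ} (hsc : IsSelfCompl l)
    (hl : l.length = 2 * m + 1) (hsum : l.sum = (2 * m + 1).choose 2) :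
    l = mirrorExtend m (l.take m) := by
  have hpair : ∀ i (hi : i < m), l[i] + l.reverse[i]'(by simp; omega) = 2 * m := by
    intro i hi
    have := isSelfCompl_iff.mp hsc i (by omega)
    rw [List.getD_eq_getElem _ _ (by omega), List.getD_eq_getElem _ _ (by simp; omega)] at this
    omega
  have hle : ∀ x ∈ l.take m, x ≤ 2 * m := by
    intro x hx
    obtain ⟨i, hi, rfl⟩ := List.getElem_of_mem hx
    have hi : i < m := by simp only [List.length_take] at hi; omega
    have := hpair i hi
    rw [List.getElem_take]
    omega
  have hdrop : l.drop (m + 1) = (l.take m).reverse.map (2 * m - ·) := by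
    have hrev : l.reverse.take m = (l.take m).map (2 * m - ·) := by
      refine List.ext_getElem (by simp [hl]) fun i h₁ _ => ?_
      have hi : i < m := by simp at h₁; omega
      have := hpair i hi
      rw [List.getElem_take, List.getElem_map, List.getElem_take]
      omega
    rw [List.map_reverse, ← hrev, List.take_reverse, hl, show 2 * m + 1 - m = m + 1 by omega,
      List.reverse_reverse]
  have hsplit : l = l.take m ++ l[m] :: l.drop (m + 1) := by
    rw [← List.drop_eq_getElem_cons (by omega), List.take_append_drop]
  have hmid : l[m] = m := by
    have hcompl := List.sum_map_tsub_add_sum (l := (l.take m).reverse)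
      fun x hx => hle x (List.mem_reverse.mp hx)
    rw [List.length_reverse, List.length_take, hl, List.sum_reverse, ← hdrop,
      show min m (2 * m + 1) = m by omega] at hcompl
    rw [hsplit, List.sum_append, List.sum_cons, Nat.choose_two_two_mul_add_one] at hsum
    nlinarith
  calc l = l.take m ++ l[m] :: l.drop (m + 1) := hsplit
    _ = mirrorExtend m (l.take m) := by rw [hmid, hdrop, mirrorExtend]

theorem setOf_strong_selfCompl_eq_image (m : ℕ) :
    {l : List ℕ | l.length = 2 * m + 1 ∧ IsStrongScoreSeq l ∧ IsSelfCompl l} =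
      mirrorExtend m '' halfSeqs m := by
  ext l
  constructor
  · rintro ⟨hl, hstrong, hsc⟩
    have hlt : (l.take m).length = m := List.length_take_of_le (by omega)
    have hmirror := hsc.eq_mirrorExtend_take hl (hl ▸ hstrong.2.2)
    refine ⟨l.take m, ?_, hmirror.symm⟩
    rw [← isStrongScoreSeq_mirrorExtend_iff hlt, ← hmirror]
    exact hstrong
  · rintro ⟨t, ht, rfl⟩
    have hle : ∀ x ∈ t, x ≤ 2 * m := fun x hx => (ht.2.2.2 x hx).trans (by omega)
    exact ⟨length_mirrorExtend ht.1, (isStrongScoreSeq_mirrorExtend_iff ht.1).mpr ht,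
      isSelfCompl_mirrorExtend ht.1 hle⟩

theorem SSCS_two_mul_add_one (m : ℕ) : SSCS (2 * m + 1) = (halfSeqs m).ncard := by
  rw [SSCS, setOf_strong_selfCompl_eq_image, Set.InjOn.ncard_image]
  intro t ht s hs hts
  rw [← take_mirrorExtend ht.1, hts, take_mirrorExtend hs.1]

def gSeqs (n T E : ℕ) : Set (List ℕ) :=
  {l | l.length = n ∧ l.Pairwise (· ≤ ·) ∧
    (∀ r, 1 ≤ r → r < n → r.choose 2 < (l.take r).sum) ∧ l.sum = T ∧ l.getLast? = some E}

theorem gSeqs_finite (n T E : ℕ) : (gSeqs n T E).Finite :=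
  (List.finite_setOf_length_eq_forall_le n T).subset fun _ ⟨hl, _, _, hsum, _⟩ =>
    ⟨hl, fun _ hx => hsum ▸ List.le_sum_of_mem hx⟩

theorem halfSeqs_eq_biUnion_gSeqs {m : ℕ} (hm : 1 ≤ m) :
    halfSeqs m = ⋃ p ∈ (Finset.Icc (m.choose 2 + 1) (m ^ 2)).sigma
      (fun T => Finset.Icc ((T + m - 1) / m) m), gSeqs m p.1 p.2 := by
  ext t
  simp only [Set.mem_iUnion, Finset.mem_sigma, Finset.mem_Icc, exists_prop, Sigma.exists]
  constructor
  · rintro ⟨hl, hsort, hstrong, hle⟩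
    have hne : t ≠ [] := List.ne_nil_of_length_pos (by omega)
    have hsum_gt : m.choose 2 < t.sum := by
      simpa [← hl] using hstrong m hm le_rfl
    have hsum_le : t.sum ≤ m * t.getLast hne := by
      simpa [hl] using List.sum_le_card_nsmul t _ fun x hx => hsort.rel_getLast hx
    have hlast := hle _ (List.getLast_mem hne)
    refine ⟨t.sum, t.getLast hne, ⟨⟨by omega, ?_⟩, ?_, hlast⟩,
      hl, hsort, fun r h₁ h₂ => hstrong r h₁ h₂.le, rfl, List.getLast?_eq_some_getLast hne⟩
    · nlinarith
    · rw [Nat.div_le_iff_le_mul_add_pred (by omega)]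
      omega
  · rintro ⟨T, E, ⟨⟨hT, -⟩, -, hE⟩, hl, hsort, hstrong, rfl, hlast⟩
    refine ⟨hl, hsort, fun r h₁ h₂ => ?_, fun x hx => ?_⟩
    · rcases h₂.lt_or_eq with h₂ | rfl
      · exact hstrong r h₁ h₂
      · simpa [← hl] using hT
    · have hx_le := hsort.rel_getLast hx
      rw [List.getLast_of_getLast?_eq_some hlast] at hx_le
      exact hx_le.trans hE

theorem ncard_halfSeqs {m : ℕ} (hm : 1 ≤ m) :
    (halfSeqs m).ncard =
      ∑ T ∈ Finset.Icc (m.choose 2 + 1) (m ^ 2), ∑ E ∈ Finset.Icc ((T + m - 1) / m) m, G m T E := by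
  simp_rw [halfSeqs_eq_biUnion_gSeqs hm, ← Finset.mem_coe]
  rw [Set.Finite.ncard_biUnion (Finset.finite_toSet _)
    (fun p _ => gSeqs_finite m p.1 p.2), finsum_mem_coe_finset, Finset.sum_sigma]
  · rfl
  rintro ⟨T, E⟩ - ⟨T', E'⟩ - hne
  refine Set.disjoint_left.mpr ?_
  rintro l ⟨-, -, -, hT, hE⟩ ⟨-, -, -, hT', hE'⟩
  apply hne
  obtain rfl : T = T' := hT.symm.trans hT'
  obtain rfl : E = E' := Option.some.inj (hE.symm.trans hE')
  rfl

/-- `SSCS(2m+1) = ∑_{T=C(m,2)+1}^{m²} ∑_{E=⌈T/m⌉}^{m} G_m[T,E]` for `m ≥ 1`. -/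
theorem SSCS_odd (m : ℕ) (hm : 1 ≤ m) :
    SSCS (2 * m + 1) =
      ∑ T ∈ Finset.Icc (m.choose 2 + 1) (m ^ 2),
        ∑ E ∈ Finset.Icc ((T + m - 1) / m) m, G m T E := by
  rw [SSCS_two_mul_add_one, ncard_halfSeqs hm]
end

section
/- For every m ≥ 1, the map sending a self-complementary score sequence (s_1, ..., s_{2m}) of length 2m to its first half (s_1, ..., s_m) is a bijection onto the set of nondecreasing sequences (s_1 ≤ ... ≤ s_m) of nonnegative integers satisfying ∑_{i=1}^r s_i ≥ C(r,2) for all 1 ≤ r < m, s_m ≤ m-1, and m·s_m ≥ ∑_{i=1}^m s_i ≥ C(m,2). -/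
/-! A self-complementary sequence of length `2m` is determined by its first half `h`: it is
`h ++ h.reflect (2m-1)`, the second half listing the complements `2m-1-s_i` in reverse order.
For such a sequence the total is automatically `m(2m-1) = C(2m,2)`, monotonicity across the
middle amounts to `s_m ≤ m-1`, and Landau's inequality at `r = m+k` is equivalent to the one at
`m-k`: the last `m-k` terms sum to `(m-k)(2m-1) - ∑_{i ≤ m-k} s_i`, and
`C(m+k,2) = C(m-k,2) + k(2m-1)`. -/

namespace List

def reflect (c : ℕ) (l : List ℕ) : List ℕ := (l.map (c - ·)).reverse

variable {c : ℕ} {l : List ℕ}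

@[simp] theorem length_reflect : (l.reflect c).length = l.length := by simp [reflect]

theorem mem_reflect {y : ℕ} : y ∈ l.reflect c ↔ ∃ x ∈ l, c - x = y := by simp [reflect]

theorem getElem_reflect {i : ℕ} (hi : i < (l.reflect c).length) :
    (l.reflect c)[i] = c - l[l.length - 1 - i]'(by simp at hi; omega) := by
  simp [reflect]

theorem Pairwise.reflect (hl : l.Pairwise (· ≤ ·)) : (l.reflect c).Pairwise (· ≤ ·) :=
  pairwise_reverse.2 (hl.map _ fun _ _ h => Nat.sub_le_sub_left h c)

theorem sum_reflect_add_sum (hc : ∀ x ∈ l, x ≤ c) : (l.reflect c).sum + l.sum = l.length * c := by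
  induction l with
  | nil => simp [reflect]
  | cons a l ih =>
    have := ih fun x hx => hc x (mem_cons_of_mem a hx)
    simp only [reflect, map_cons, reverse_cons, sum_append, sum_reverse, sum_cons, sum_nil,
      length_cons] at this ⊢
    have := hc a mem_cons_self
    rw [add_one_mul]
    omega

theorem take_reflect (k : ℕ) : (l.reflect c).take k = (l.drop (l.length - k)).reflect c := by
  simp [reflect, take_reverse, map_drop]

theorem Pairwise.le_getD_length_sub_one (hl : l.Pairwise (· ≤ ·)) {x : ℕ} (hx : x ∈ l) :
    x ≤ l.getD (l.length - 1) 0 := by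
  obtain ⟨i, hi, rfl⟩ := mem_iff_getElem.1 hx
  rw [getD_eq_getElem _ _ (by omega)]
  rcases (Nat.le_sub_one_of_lt hi).lt_or_eq with hlt | rfl
  · exact pairwise_iff_getElem.1 hl _ _ _ _ hlt
  · rfl

end List

theorem Nat.add_choose_two (a b : ℕ) : (a + b).choose 2 = a.choose 2 + a * b + b.choose 2 := by
  rw [Nat.add_choose_eq]
  simp [Finset.Nat.antidiagonal_succ]
  ring

theorem Nat.add_choose_two_eq_sub_choose_two {m k : ℕ} (hk : k ≤ m) :
    (m + k).choose 2 = (m - k).choose 2 + k * (2 * m - 1) := by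
  obtain ⟨a, rfl⟩ := Nat.exists_eq_add_of_le' hk
  have h2k : (2 * k).choose 2 = k * (2 * k - 1) := by
    rw [Nat.choose_two_right, mul_assoc, Nat.mul_div_cancel_left _ two_pos]
  rw [Nat.add_sub_cancel, add_assoc, Nat.add_choose_two, ← two_mul, h2k]
  rcases Nat.eq_zero_or_pos k with rfl | hk0
  · simp
  · rw [show 2 * (a + k) - 1 = 2 * a + (2 * k - 1) by omega]
    ring

open List

def IsHalfScoreSeq (m : ℕ) (h : List ℕ) : Prop :=
  h.Pairwise (· ≤ ·) ∧ (∀ x ∈ h, x ≤ m - 1) ∧ ∀ r ≤ m, r.choose 2 ≤ (h.take r).sum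

section HalfSequence

variable {m : ℕ} {h : List ℕ}

theorem pairwise_append_reflect_iff :
    (h ++ h.reflect (2 * m - 1)).Pairwise (· ≤ ·) ↔ h.Pairwise (· ≤ ·) ∧ ∀ x ∈ h, x ≤ m - 1 := by
  rw [pairwise_append]
  constructor
  · rintro ⟨hh, -, hle⟩
    refine ⟨hh, fun x hx => ?_⟩
    have := hle x hx _ (mem_reflect.2 ⟨x, hx, rfl⟩)
    omega
  · rintro ⟨hh, hle⟩
    refine ⟨hh, hh.reflect, fun x hx y hy => ?_⟩
    obtain ⟨z, hz, rfl⟩ := mem_reflect.1 hy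
    have := hle x hx
    have := hle z hz
    omega

theorem sum_take_length_add_append_reflect {c k : ℕ} (hk : k ≤ h.length) (hc : ∀ x ∈ h, x ≤ c) :
    ((h ++ h.reflect c).take (h.length + k)).sum = (h.take (h.length - k)).sum + k * c := by
  have hdrop := sum_reflect_add_sum fun x hx => hc x (mem_of_mem_drop (i := h.length - k) hx)
  have hsplit := sum_take_add_sum_drop h (h.length - k)
  rw [length_drop, Nat.sub_sub_self hk] at hdrop
  rw [take_length_add_append, sum_append, take_reflect]
  omega

theorem choose_two_le_sum_take_append_reflect_iff (hlen : h.length = m)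
    (hc : ∀ x ∈ h, x ≤ 2 * m - 1) :
    (∀ r, 1 ≤ r → r < 2 * m → r.choose 2 ≤ ((h ++ h.reflect (2 * m - 1)).take r).sum) ↔
      ∀ r ≤ m, r.choose 2 ≤ (h.take r).sum := by
  subst hlen
  have take_first_half : ∀ r ≤ h.length, (h ++ h.reflect (2 * h.length - 1)).take r = h.take r :=
    fun _ hr => take_append_of_le_length hr
  constructor
  · intro H r hr
    rcases Nat.eq_zero_or_pos r with rfl | hr0
    · simp
    · rw [← take_first_half r hr]
      exact H r hr0 (by omega)
  · intro H r hr0 hr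
    rcases le_or_gt r h.length with hrm | hrm
    · rw [take_first_half r hrm]
      exact H r hrm
    · obtain ⟨k, rfl⟩ : ∃ k, r = h.length + k := ⟨r - h.length, by omega⟩
      have hk : k ≤ h.length := by omega
      have := H (h.length - k) (Nat.sub_le _ k)
      rw [Nat.add_choose_two_eq_sub_choose_two hk, sum_take_length_add_append_reflect hk hc]
      omega

theorem isScoreSeq_append_reflect_iff (hlen : h.length = m) (hc : ∀ x ∈ h, x ≤ 2 * m - 1) :
    IsScoreSeq (h ++ h.reflect (2 * m - 1)) ↔ IsHalfScoreSeq m h := by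
  have hlen2 : (h ++ h.reflect (2 * m - 1)).length = 2 * m := by simp [hlen, two_mul]
  have hsum : (h ++ h.reflect (2 * m - 1)).sum = (2 * m).choose 2 := by
    rw [sum_append, add_comm, sum_reflect_add_sum hc, hlen, two_mul, Nat.add_choose_two_eq_sub_choose_two le_rfl]
    simp only [Nat.sub_self, Nat.choose_zero_succ, zero_add, two_mul]
  simp only [IsScoreSeq, IsHalfScoreSeq, hlen2, hsum, and_true, pairwise_append_reflect_iff,
    choose_two_le_sum_take_append_reflect_iff hlen hc, and_assoc]

theorem isHalfScoreSeq_iff (hlen : h.length = m) :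
    IsHalfScoreSeq m h ↔ h.Pairwise (· ≤ ·) ∧
      (∀ r, 1 ≤ r → r < m → r.choose 2 ≤ (h.take r).sum) ∧
      h.getD (m - 1) 0 ≤ m - 1 ∧ m.choose 2 ≤ h.sum ∧ h.sum ≤ m * h.getD (m - 1) 0 := by
  subst hlen
  have hsum : (h.take h.length).sum = h.sum := by rw [take_length]
  constructor
  · rintro ⟨hs, hle, hr⟩
    refine ⟨hs, fun r _ hr' => hr r hr'.le, ?_, hsum ▸ hr _ le_rfl, ?_⟩
    · rcases eq_or_ne h [] with rfl | hne
      · simp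
      · rw [getD_eq_getElem _ _ (by have := length_pos_iff.2 hne; omega)]
        exact hle _ (getElem_mem _)
    · simpa using h.sum_le_card_nsmul _ fun x hx => hs.le_getD_length_sub_one hx
  · rintro ⟨hs, hr, hlast, hm, -⟩
    refine ⟨hs, fun x hx => (hs.le_getD_length_sub_one hx).trans hlast, fun r hr' => ?_⟩
    rcases hr'.lt_or_eq with hr' | rfl
    · rcases Nat.eq_zero_or_pos r with rfl | hr0
      · simp
      · exact hr r hr0 hr'
    · rwa [hsum]

theorem IsSelfCompl.getElem_add_getElem {l : List ℕ} (hs : IsSelfCompl l) {i : ℕ}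
    (hi : i < l.length / 2) :
    l[l.length - 1 - i] + l[i] = l.length - 1 := by
  have := hs (i + 1) (by omega) hi
  rw [getD_eq_getElem _ _ (by omega), getD_eq_getElem _ _ (by omega)] at this
  simp only [Nat.add_sub_cancel, show l.length - (i + 1) = l.length - 1 - i by omega] at this
  omega

theorem isSelfCompl_append_reflect (hc : ∀ x ∈ h, x ≤ 2 * h.length - 1) :
    IsSelfCompl (h ++ h.reflect (2 * h.length - 1)) := by
  intro i hi hin
  simp only [length_append, length_reflect, ← two_mul] at hin ⊢
  have hin' : i ≤ h.length := by omega
  rw [getD_eq_getElem _ _ (by simp; omega), getD_eq_getElem _ _ (by simp; omega),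
    getElem_append_right (by omega), getElem_reflect, getElem_append_left (by omega)]
  simp only [show h.length - 1 - (2 * h.length - i - h.length) = i - 1 by omega]
  have := hc _ (getElem_mem (l := h) (n := i - 1) (by omega))
  omega

theorem IsSelfCompl.le_of_mem_take {l : List ℕ} (hs : IsSelfCompl l) (hl : l.length = 2 * m)
    {x : ℕ} (hx : x ∈ l.take m) : x ≤ 2 * m - 1 := by
  obtain ⟨i, hi, rfl⟩ := mem_iff_getElem.1 hx
  simp only [length_take, getElem_take] at hi ⊢
  have := hs.getElem_add_getElem (i := i) (by omega)
  omega

theorem IsSelfCompl.eq_take_append_reflect {l : List ℕ} (hs : IsSelfCompl l)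
    (hl : l.length = 2 * m) : l = l.take m ++ (l.take m).reflect (2 * m - 1) := by
  refine ext_getElem (by simp [hl, two_mul]) fun i hi _ => ?_
  by_cases him : i < m
  · rw [getElem_append_left (by simp; omega), getElem_take]
  · rw [getElem_append_right (by simp; omega), getElem_reflect, getElem_take]
    have := hs.getElem_add_getElem (i := 2 * m - 1 - i) (by omega)
    simp only [length_take, hl, show min m (2 * m) = m by omega,
      show 2 * m - 1 - (2 * m - 1 - i) = i by omega, show m - 1 - (i - m) = 2 * m - 1 - i by omega]
      at this ⊢
    omega

end HalfSequence

theorem selfcompl_even_half_bijection_general (m : ℕ) :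
    Set.BijOn (fun l : List ℕ => l.take m)
      {l : List ℕ | l.length = 2 * m ∧ IsScoreSeq l ∧ IsSelfCompl l}
      {l : List ℕ | l.length = m ∧ l.Pairwise (· ≤ ·) ∧
        (∀ r, 1 ≤ r → r < m → r.choose 2 ≤ (l.take r).sum) ∧
        l.getD (m - 1) 0 ≤ m - 1 ∧
        m.choose 2 ≤ l.sum ∧ l.sum ≤ m * l.getD (m - 1) 0} := by
  refine Set.InvOn.bijOn (f' := fun h => h ++ h.reflect (2 * m - 1)) ⟨?_, ?_⟩ ?_ ?_
  · rintro l ⟨hl, -, hs⟩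
    exact (hs.eq_take_append_reflect hl).symm
  · rintro h ⟨hlen, -⟩
    exact take_left' hlen
  · rintro l ⟨hl, hscore, hs⟩
    have hlen : (l.take m).length = m := length_take_of_le (by omega)
    rw [hs.eq_take_append_reflect hl,
      isScoreSeq_append_reflect_iff hlen fun x hx => hs.le_of_mem_take hl hx] at hscore
    exact ⟨hlen, (isHalfScoreSeq_iff hlen).1 hscore⟩
  · rintro h ⟨hlen, hhalf⟩
    rw [← isHalfScoreSeq_iff hlen] at hhalf
    have hc : ∀ x ∈ h, x ≤ 2 * m - 1 := fun x hx => (hhalf.2.1 x hx).trans (by omega)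
    refine ⟨by simp [hlen, two_mul], (isScoreSeq_append_reflect_iff hlen hc).2 hhalf, ?_⟩
    subst hlen
    exact isSelfCompl_append_reflect hc

/-- For `m ≥ 1`, taking the first half is a bijection from the set of self-complementary
score sequences of length `2m` onto the set of nondecreasing sequences `(s_1 ≤ ⋯ ≤ s_m)` of
nonnegative integers with `∑_{i=1}^r s_i ≥ C(r,2)` for `1 ≤ r < m`, `s_m ≤ m - 1`, and
`m·s_m ≥ ∑_{i=1}^m s_i ≥ C(m,2)`. -/
theorem selfcompl_even_half_bijection (m : ℕ) (hm : 1 ≤ m) :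
    Set.BijOn (fun l : List ℕ => l.take m)
      {l : List ℕ | l.length = 2 * m ∧ IsScoreSeq l ∧ IsSelfCompl l}
      {l : List ℕ | l.length = m ∧ l.Pairwise (· ≤ ·) ∧
        (∀ r, 1 ≤ r → r < m → r.choose 2 ≤ (l.take r).sum) ∧
        l.getD (m - 1) 0 ≤ m - 1 ∧
        m.choose 2 ≤ l.sum ∧ l.sum ≤ m * l.getD (m - 1) 0} :=
  selfcompl_even_half_bijection_general m
end
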